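/- Let Ω be a bounded complete circular domain in ℂⁿ, i.e., a bounded domain such that μ·z ∈ Ω whenever z ∈ Ω and μ ∈ ℂ with |μ| ≤ 1 (in particular 0 ∈ Ω). Then K_p(0) = 1/λ(Ω) for every 0 < p < ∞. -/

import Mathlib

open MeasureTheory Metric Complex Filter

noncomputable section

/-- Lebesgue measure on `ℂⁿ` (with the Euclidean metric). -/
noncomputable instance {n : ℕ} : MeasureSpace (EuclideanSpace ℂ (Fin n)) :=
  { toMeasurableSpace := inferInstance
    volume := (volume : Measure (Fin n → ℂ)).map (WithLp.toLp 2) }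

/-- Membership in the `p`-Bergman space `A^p(Ω)`: `f` is holomorphic on `Ω` with
`∫_Ω |f|^p dλ < ∞`. -/
def MemAp {n : ℕ} (Ω : Set (EuclideanSpace ℂ (Fin n))) (p : ℝ)
    (f : EuclideanSpace ℂ (Fin n) → ℂ) : Prop :=
  DifferentiableOn ℂ f Ω ∧
    (∫⁻ ζ in Ω, ENNReal.ofReal (‖f ζ‖ ^ p)) < ⊤

/-- The `p`-Bergman kernel
`K_p(z) = sup { |f(z)|^p / ∫_Ω |f|^p : f ∈ A^p(Ω), f ≢ 0 }`. -/
def bergmanK {n : ℕ} (Ω : Set (EuclideanSpace ℂ (Fin n))) (p : ℝ)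
    (z : EuclideanSpace ℂ (Fin n)) : ℝ :=
  sSup { t : ℝ | ∃ f, MemAp Ω p f ∧ (∃ ζ ∈ Ω, f ζ ≠ 0) ∧
    t = ‖f z‖ ^ p / ∫ ζ in Ω, ‖f ζ‖ ^ p }

/-- `m` is a minimizer of `∫_Ω |f|^p` among `f ∈ A^p(Ω)` with `f z = 1`;
for `1 ≤ p < ∞` the minimizer is unique and denoted `m_p(·,z)`. -/
def IsMinimizer {n : ℕ} (Ω : Set (EuclideanSpace ℂ (Fin n))) (p : ℝ)
    (z : EuclideanSpace ℂ (Fin n)) (m : EuclideanSpace ℂ (Fin n) → ℂ) : Prop :=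
  MemAp Ω p m ∧ m z = 1 ∧
    ∀ f, MemAp Ω p f → f z = 1 →
      (∫ ζ in Ω, ‖m ζ‖ ^ p) ≤ ∫ ζ in Ω, ‖f ζ‖ ^ p

open Real Topology intervalIntegral
open scoped ENNReal NNReal

lemma L1 {ψ : ℂ → ℂ} (hψ : DifferentiableOn ℂ ψ (ball (0:ℂ) 1)) {r : ℝ}
    (hr0 : 0 < r) (hr1 : r < 1) :
    2 * π * ‖ψ 0‖ ≤ ∫ θ in (0:ℝ)..(2*π), ‖ψ (circleMap 0 r θ)‖ := by
  have h1 : DiffContOnCl ℂ ψ (ball 0 r) := by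
    refine DifferentiableOn.diffContOnCl ?_
    rw [closure_ball (0:ℂ) hr0.ne']
    exact hψ.mono (closedBall_subset_ball hr1)
  have h2 := h1.circleIntegral_sub_inv_smul (mem_ball_self hr0)
  rw [circleIntegral] at h2
  have h3 : ∀ θ : ℝ, deriv (circleMap 0 r) θ • (circleMap 0 r θ - 0)⁻¹ • ψ (circleMap 0 r θ)
      = I * ψ (circleMap 0 r θ) := by
    intro θ
    have hne : circleMap 0 r θ ≠ 0 := circleMap_ne_center hr0.ne'
    rw [deriv_circleMap]
    simp only [smul_eq_mul, sub_zero]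
    field_simp
    try ring
  simp only [h3] at h2
  rw [intervalIntegral.integral_const_mul] at h2
  have h4 : ∫ θ in (0:ℝ)..(2*π), ψ (circleMap 0 r θ) = 2 * π * ψ 0 := by
    apply mul_left_cancel₀ I_ne_zero
    rw [h2, smul_eq_mul]; ring
  have h5 : 2 * π * ‖ψ 0‖ = ‖∫ θ in (0:ℝ)..(2*π), ψ (circleMap 0 r θ)‖ := by
    rw [h4]
    simp [abs_of_pos Real.pi_pos]
    try ring
  rw [h5]
  refine (intervalIntegral.norm_integral_le_integral_norm (by positivity)).trans ?_
  simp



def factor (a z : ℂ) : ℂ :=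
  if 1 ≤ ‖a‖ then z - a else 1 - (starRingEnd ℂ) a * z

def flog (a z : ℂ) : ℂ :=
  if 1 ≤ ‖a‖ then Complex.log (1 - z / a) + Complex.log (-a)
  else Complex.log (1 - (starRingEnd ℂ) a * z)

lemma slit1 {w : ℂ} (hw : ‖w‖ < 1) : 1 - w ∈ Complex.slitPlane := by
  rw [Complex.mem_slitPlane_iff]
  left
  have : w.re ≤ ‖w‖ := Complex.re_le_norm w
  simp only [Complex.sub_re, Complex.one_re]
  linarith

lemma one_sub_ne {w : ℂ} (hw : ‖w‖ < 1) : 1 - w ≠ 0 :=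
  Complex.slitPlane_ne_zero (slit1 hw)

lemma abs_conj_mul_lt {a z : ℂ} (ha : ‖a‖ < 1) (hz : ‖z‖ < 1) :
    ‖(starRingEnd ℂ) a * z‖ < 1 := by
  rw [norm_mul, Complex.norm_conj]
  calc ‖a‖ * ‖z‖ ≤ 1 * ‖z‖ :=
        mul_le_mul_of_nonneg_right ha.le (norm_nonneg z)
    _ = ‖z‖ := one_mul _
    _ < 1 := hz

lemma abs_div_lt {a z : ℂ} (ha : 1 ≤ ‖a‖) (hz : ‖z‖ < 1) :
    ‖z / a‖ < 1 := by
  rw [norm_div]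
  rw [div_lt_one (lt_of_lt_of_le one_pos ha)]
  linarith

lemma factor_ne_zero (a : ℂ) {z : ℂ} (hz : ‖z‖ < 1) : factor a z ≠ 0 := by
  unfold factor
  split_ifs with h
  · intro hc
    rw [sub_eq_zero] at hc
    rw [hc] at hz; linarith
  · push_neg at h
    exact one_sub_ne (abs_conj_mul_lt h hz)

lemma exp_flog {a z : ℂ} (hz : ‖z‖ < 1) : Complex.exp (flog a z) = factor a z := by
  unfold flog factor
  split_ifs with h
  · have ha0 : a ≠ 0 := by
      intro hc; rw [hc] at h; simp at h; linarith
    rw [Complex.exp_add, Complex.exp_log (one_sub_ne (abs_div_lt h hz)),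
      Complex.exp_log (neg_ne_zero.mpr ha0)]
    field_simp
    ring
  · push_neg at h
    exact Complex.exp_log (one_sub_ne (abs_conj_mul_lt h hz))

lemma diff_flog (a : ℂ) {z : ℂ} (hz : ‖z‖ < 1) :
    DifferentiableAt ℂ (flog a) z := by
  unfold flog
  split_ifs with h
  · apply DifferentiableAt.add _ (differentiableAt_const _)
    apply DifferentiableAt.comp (f := fun z => 1 - z / a) (g := Complex.log)
    · exact Complex.differentiableAt_log (slit1 (abs_div_lt h hz))
    · fun_prop
  · push_neg at h
    apply DifferentiableAt.comp (f := fun z => 1 - (starRingEnd ℂ) a * z) (g := Complex.log)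
    · exact Complex.differentiableAt_log (slit1 (abs_conj_mul_lt h hz))
    · fun_prop

lemma abs_factor_circle {a z : ℂ} (hz : ‖z‖ = 1) :
    ‖factor a z‖ = ‖z - a‖ := by
  unfold factor
  split_ifs with h
  · rfl
  · have hz2 : (starRingEnd ℂ) z * z = 1 := by
      rw [mul_comm, Complex.mul_conj]
      norm_cast
      rw [Complex.normSq_eq_norm_sq, hz]; norm_num
    calc ‖1 - (starRingEnd ℂ) a * z‖
        = ‖(starRingEnd ℂ) (1 - (starRingEnd ℂ) a * z)‖ := (Complex.norm_conj _).symm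
      _ = ‖(starRingEnd ℂ) z * (z - a)‖ := by
            congr 1
            simp only [map_sub, map_one, map_mul, Complex.conj_conj]
            rw [mul_sub, hz2]; ring
      _ = ‖(starRingEnd ℂ) z‖ * ‖z - a‖ := norm_mul _ _
      _ = ‖z - a‖ := by rw [Complex.norm_conj, hz, one_mul]

lemma abs_le_abs_factor_zero (a : ℂ) : ‖a‖ ≤ ‖factor a 0‖ := by
  unfold factor
  split_ifs with h
  · simp
  · push_neg at h
    simpa using h.le


def Hl (l : List ℂ) (z : ℂ) : ℂ := (l.map (factor · z)).prod

def Sl (l : List ℂ) (z : ℂ) : ℂ := (l.map (flog · z)).sum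

lemma Hl_nil (z : ℂ) : Hl [] z = 1 := by simp [Hl]
lemma Hl_cons (a : ℂ) (t : List ℂ) (z : ℂ) : Hl (a :: t) z = factor a z * Hl t z := by
  simp [Hl]
lemma Sl_nil (z : ℂ) : Sl [] z = 0 := by simp [Sl]
lemma Sl_cons (a : ℂ) (t : List ℂ) (z : ℂ) : Sl (a :: t) z = flog a z + Sl t z := by
  simp [Sl]

lemma exp_Sl (l : List ℂ) {z : ℂ} (hz : ‖z‖ < 1) :
    Complex.exp (Sl l z) = Hl l z := by
  induction l with
  | nil => simp [Sl_nil, Hl_nil]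
  | cons a t ih => rw [Sl_cons, Hl_cons, Complex.exp_add, exp_flog hz, ih]

lemma continuous_Hl (l : List ℂ) : Continuous (Hl l) := by
  induction l with
  | nil =>
    have he : Hl [] = fun _ => 1 := by funext w; exact Hl_nil w
    rw [he]; exact continuous_const
  | cons a t ih =>
    have he : Hl (a :: t) = fun z => factor a z * Hl t z := by funext w; exact Hl_cons a t w
    rw [he]
    refine Continuous.mul ?_ ih
    by_cases h : 1 ≤ ‖a‖
    · have hf : factor a = fun z => z - a := by funext w; simp [factor, if_pos h]
      rw [hf]; fun_prop
    · have hf : factor a = fun z => 1 - (starRingEnd ℂ) a * z := by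
        funext w; simp [factor, if_neg h]
      rw [hf]; fun_prop

lemma diff_Sl (l : List ℂ) {z : ℂ} (hz : ‖z‖ < 1) :
    DifferentiableAt ℂ (Sl l) z := by
  induction l with
  | nil =>
    have he : Sl [] = fun _ => (0:ℂ) := by funext w; exact Sl_nil w
    rw [he]; exact differentiableAt_const _
  | cons a t ih =>
    have he : Sl (a :: t) = fun z => flog a z + Sl t z := by funext w; exact Sl_cons a t w
    rw [he]
    exact DifferentiableAt.add (diff_flog a hz) ih

lemma abs_Hl_circle (l : List ℂ) {z : ℂ} (hz : ‖z‖ = 1) :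
    ‖Hl l z‖ = ‖(l.map (fun a => z - a)).prod‖ := by
  induction l with
  | nil => simp [Hl_nil]
  | cons a t ih =>
    rw [Hl_cons, List.map_cons, List.prod_cons, norm_mul, norm_mul, abs_factor_circle hz, ih]

lemma abs_prod_le_abs_Hl_zero (l : List ℂ) :
    ‖(l.map (fun a => (0:ℂ) - a)).prod‖ ≤ ‖Hl l 0‖ := by
  induction l with
  | nil => simp [Hl_nil]
  | cons a t ih =>
    rw [Hl_cons, List.map_cons, List.prod_cons, norm_mul, norm_mul]
    apply mul_le_mul _ ih (norm_nonneg _) (norm_nonneg _)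
    simpa using abs_le_abs_factor_zero a

def Phi (p : ℝ) (c : ℂ) (l : List ℂ) (z : ℂ) : ℂ :=
  Complex.exp ((p : ℂ) * (Complex.log c + Sl l z))

lemma diff_Phi (p : ℝ) (c : ℂ) (l : List ℂ) :
    DifferentiableOn ℂ (Phi p c l) (ball (0:ℂ) 1) := by
  intro z hz
  have hz1 : ‖z‖ < 1 := by
    exact mem_ball_zero_iff.mp hz
  apply DifferentiableAt.differentiableWithinAt
  apply DifferentiableAt.cexp
  apply DifferentiableAt.mul (differentiableAt_const _)
  exact DifferentiableAt.add (differentiableAt_const _) (diff_Sl l hz1)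

lemma abs_Phi {p : ℝ} {c : ℂ} (hc : c ≠ 0) (l : List ℂ) {z : ℂ} (hz : ‖z‖ < 1) :
    ‖Phi p c l z‖ = ‖c * Hl l z‖ ^ p := by
  have key : c * Hl l z = Complex.exp (Complex.log c + Sl l z) := by
    rw [Complex.exp_add, Complex.exp_log hc, exp_Sl l hz]
  rw [key, Phi, Complex.norm_exp, Complex.norm_exp]
  rw [Real.rpow_def_of_pos (Real.exp_pos _), Real.log_exp]
  congr 1
  rw [Complex.re_ofReal_mul]
  ring


-- L1 from file b (paste here when assembling)

lemma L3core {p : ℝ} (hp : 0 < p)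
    (L1 : ∀ {ψ : ℂ → ℂ}, DifferentiableOn ℂ ψ (ball (0:ℂ) 1) → ∀ {r : ℝ}, 0 < r → r < 1 →
      2 * π * ‖ψ 0‖ ≤ ∫ θ in (0:ℝ)..(2*π), ‖ψ (circleMap 0 r θ)‖)
    (q : Polynomial ℂ) :
    2 * π * ‖q.eval 0‖ ^ p
      ≤ ∫ θ in (0:ℝ)..(2*π), ‖q.eval (circleMap 0 1 θ)‖ ^ p := by
  rcases eq_or_ne q 0 with rfl | hq
  · simp [Real.zero_rpow hp.ne']
  set c := q.leadingCoeff with hcdef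
  have hc : c ≠ 0 := Polynomial.leadingCoeff_ne_zero.mpr hq
  set l : List ℂ := q.roots.toList with hldef
  have heval : ∀ z : ℂ, q.eval z = c * ((l.map (fun a => z - a)).prod) := by
    intro z
    conv_lhs => rw [(IsAlgClosed.splits q).eq_prod_roots]
    rw [Polynomial.eval_mul, Polynomial.eval_C, Polynomial.eval_multiset_prod]
    congr 1
    rw [Multiset.map_map]
    have : q.roots = (l : Multiset ℂ) := (Multiset.coe_toList _).symm
    rw [this, Multiset.map_coe, Multiset.prod_coe]
    congr 1
    refine List.map_congr_left fun a _ => ?_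
    simp
  -- continuity of the comparison function
  have hcont : Continuous fun z => ‖c * Hl l z‖ :=
    continuous_norm.comp (continuous_const.mul (continuous_Hl l))
  -- Step A
  have hA : ∀ r : ℝ, 0 < r → r < 1 →
      2 * π * ‖c * Hl l 0‖ ^ p
        ≤ ∫ θ in (0:ℝ)..(2*π), ‖c * Hl l (circleMap 0 r θ)‖ ^ p := by
    intro r hr0 hr1
    have h1 := L1 (diff_Phi p c l) hr0 hr1
    rw [abs_Phi hc l (by simp)] at h1
    refine h1.trans_eq (intervalIntegral.integral_congr fun θ _ => ?_)
    exact abs_Phi hc l (by rw [norm_circleMap_zero, abs_of_pos hr0]; exact hr1)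
  -- Step B : limit r → 1
  obtain ⟨M, hM⟩ := (isCompact_closedBall (0:ℂ) 1).exists_bound_of_continuousOn
    (hcont.continuousOn (s := closedBall 0 1))
  set M' := max M 0 with hM'def
  have hM'0 : 0 ≤ M' := le_max_right _ _
  have hMb : ∀ z : ℂ, ‖z‖ ≤ 1 → ‖c * Hl l z‖ ≤ M' := by
    intro z hz
    have := hM z (by rwa [mem_closedBall, dist_zero_right])
    calc ‖c * Hl l z‖ ≤ M := by
          simpa [Real.norm_eq_abs, _root_.abs_of_nonneg (norm_nonneg _)] using this
      _ ≤ M' := le_max_left _ _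
  set rk : ℕ → ℝ := fun k => 1 - 1/(k+2) with hrk
  have hrk0 : ∀ k, 0 < rk k := by
    intro k
    have h2 : (1:ℝ)/(k+2) ≤ 1/2 := by
      apply div_le_div_of_nonneg_left one_pos.le two_pos
      exact_mod_cast by linarith [Nat.cast_nonneg (α := ℝ) k]
    simp only [hrk]; linarith
  have hrk1 : ∀ k, rk k < 1 := by
    intro k
    have : (0:ℝ) < 1/(k+2) := by positivity
    simp only [hrk]; linarith
  have hrklim : Tendsto rk atTop (𝓝 1) := by
    have : Tendsto (fun k : ℕ => 1/((k:ℝ)+2)) atTop (𝓝 0) := by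
      apply Tendsto.div_atTop tendsto_const_nhds
      exact Filter.tendsto_atTop_add_const_right atTop 2 tendsto_natCast_atTop_atTop
    simpa [hrk] using tendsto_const_nhds.sub this
  have hB : Tendsto (fun k => ∫ θ in (0:ℝ)..(2*π), ‖c * Hl l (circleMap 0 (rk k) θ)‖ ^ p)
      atTop (𝓝 (∫ θ in (0:ℝ)..(2*π), ‖c * Hl l (circleMap 0 1 θ)‖ ^ p)) := by
    apply intervalIntegral.tendsto_integral_filter_of_dominated_convergence (fun _ => M' ^ p)
    · exact Filter.Eventually.of_forall fun k =>
        ((Real.continuous_rpow_const hp.le).comp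
          (hcont.comp (continuous_circleMap 0 (rk k)))).aestronglyMeasurable
    · refine Filter.Eventually.of_forall fun k => ae_of_all _ fun θ _ => ?_
      rw [Real.norm_eq_abs, _root_.abs_of_nonneg (Real.rpow_nonneg (norm_nonneg _) p)]
      apply Real.rpow_le_rpow (norm_nonneg _) _ hp.le
      apply hMb
      rw [norm_circleMap_zero, abs_of_pos (hrk0 k)]
      exact (hrk1 k).le
    · exact intervalIntegrable_const
    · refine ae_of_all _ fun θ _ => ?_
      have hcm : Tendsto (fun k => circleMap 0 (rk k) θ) atTop (𝓝 (circleMap 0 1 θ)) := by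
        have : Continuous fun r : ℝ => circleMap 0 r θ := by
          simp only [circleMap_zero]
          fun_prop
        exact (this.tendsto 1).comp hrklim
      have h1 : Tendsto (fun k => ‖c * Hl l (circleMap 0 (rk k) θ)‖) atTop
          (𝓝 (‖c * Hl l (circleMap 0 1 θ)‖)) := (hcont.tendsto _).comp hcm
      exact ((Real.continuous_rpow_const hp.le).tendsto _).comp h1
  have hC : 2 * π * ‖c * Hl l 0‖ ^ p
      ≤ ∫ θ in (0:ℝ)..(2*π), ‖c * Hl l (circleMap 0 1 θ)‖ ^ p :=
    ge_of_tendsto hB (Filter.Eventually.of_forall fun k => hA (rk k) (hrk0 k) (hrk1 k))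
  -- Step D/E
  have hD : ∀ θ : ℝ, ‖c * Hl l (circleMap 0 1 θ)‖ = ‖q.eval (circleMap 0 1 θ)‖ := by
    intro θ
    have hz : ‖circleMap 0 1 θ‖ = 1 := by rw [norm_circleMap_zero]; norm_num
    rw [heval, norm_mul, norm_mul, abs_Hl_circle l hz]
  have hE : ‖q.eval 0‖ ≤ ‖c * Hl l 0‖ := by
    rw [heval 0, norm_mul, norm_mul]
    exact mul_le_mul_of_nonneg_left (abs_prod_le_abs_Hl_zero l) (norm_nonneg c)
  calc 2 * π * ‖q.eval 0‖ ^ p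
      ≤ 2 * π * ‖c * Hl l 0‖ ^ p := by
        apply mul_le_mul_of_nonneg_left _ (by positivity)
        exact Real.rpow_le_rpow (norm_nonneg _) hE hp.le
    _ ≤ ∫ θ in (0:ℝ)..(2*π), ‖c * Hl l (circleMap 0 1 θ)‖ ^ p := hC
    _ = ∫ θ in (0:ℝ)..(2*π), ‖q.eval (circleMap 0 1 θ)‖ ^ p :=
        intervalIntegral.integral_congr fun θ _ => by rw [hD]


lemma L4core {p : ℝ} (hp : 0 < p)
    (L3 : ∀ q : Polynomial ℂ,
      2 * π * ‖q.eval 0‖ ^ p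
        ≤ ∫ θ in (0:ℝ)..(2*π), ‖q.eval (circleMap 0 1 θ)‖ ^ p)
    {g : ℂ → ℂ} {R : ℝ} (hR : 1 < R) (hg : DifferentiableOn ℂ g (ball (0:ℂ) R)) :
    2 * π * ‖g 0‖ ^ p
      ≤ ∫ θ in (0:ℝ)..(2*π), ‖g (circleMap 0 1 θ)‖ ^ p := by
  -- radii
  set R₁ : NNReal := Real.toNNReal ((1+R)/2) with hR₁def
  have hR₁r : (R₁ : ℝ) = (1+R)/2 := Real.coe_toNNReal _ (by linarith)
  have hR₁gt : 1 < (R₁:ℝ) := by rw [hR₁r]; linarith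
  set r' : NNReal := Real.toNNReal ((3+R)/4) with hr'def
  have hr'r : (r' : ℝ) = (3+R)/4 := Real.coe_toNNReal _ (by linarith)
  have hr'gt : 1 < (r':ℝ) := by rw [hr'r]; linarith
  have hr'lt : (r':ℝ) < (R₁:ℝ) := by rw [hr'r, hR₁r]; linarith
  have hball : closedBall (0:ℂ) (R₁:ℝ) ⊆ ball 0 R := by
    apply closedBall_subset_ball
    rw [hR₁r]; linarith
  have hps : HasFPowerSeriesOnBall g (cauchyPowerSeries g 0 R₁) 0 R₁ :=
    (hg.mono hball).hasFPowerSeriesOnBall (by exact_mod_cast lt_trans one_pos hR₁gt)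
  set ps := cauchyPowerSeries g 0 R₁ with hpsdef
  have huc : TendstoUniformlyOn (fun n y => ps.partialSum n y) (fun y => g (0 + y)) atTop
      (ball (0:ℂ) (r':ℝ)) := hps.tendstoUniformlyOn (by exact_mod_cast hr'lt)
  -- polynomials
  set qn : ℕ → Polynomial ℂ := fun n =>
    ∑ k ∈ Finset.range n, Polynomial.C (ps.coeff k) * Polynomial.X ^ k with hqn
  have hqneval : ∀ n z, (qn n).eval z = ps.partialSum n z := by
    intro n z
    rw [hqn]
    simp only [Polynomial.eval_finset_sum, Polynomial.eval_mul, Polynomial.eval_C,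
      Polynomial.eval_pow, Polynomial.eval_X]
    rw [FormalMultilinearSeries.partialSum]
    congr 1
    funext k
    rw [ps.apply_eq_pow_smul_coeff, smul_eq_mul]
    ring
  have hq0 : ∀ n, 1 ≤ n → (qn n).eval 0 = g 0 := by
    intro n hn
    rw [hqneval, FormalMultilinearSeries.partialSum]
    rw [Finset.sum_eq_single 0]
    · have := hps.coeff_zero (fun _ => 0)
      simpa using this
    · intro k _ hk
      rw [ps.apply_eq_pow_smul_coeff, zero_pow hk, zero_smul]
    · intro h
      exact absurd (Finset.mem_range.mpr (by omega)) h
  -- uniform bound on the unit circle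
  have hsub1 : closedBall (0:ℂ) 1 ⊆ ball 0 R := closedBall_subset_ball hR
  obtain ⟨M, hM⟩ := (isCompact_closedBall (0:ℂ) 1).exists_bound_of_continuousOn
    ((hg.continuousOn).mono hsub1)
  have hcirc1 : ∀ θ : ℝ, circleMap 0 1 θ ∈ closedBall (0:ℂ) 1 := by
    intro θ
    rw [mem_closedBall_zero_iff, norm_circleMap_zero]
    norm_num
  have hcircr' : ∀ θ : ℝ, circleMap 0 1 θ ∈ ball (0:ℂ) (r':ℝ) := by
    intro θ
    rw [mem_ball_zero_iff, norm_circleMap_zero]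
    simpa using hr'gt
  have hev : ∀ᶠ n in atTop, ∀ z ∈ ball (0:ℂ) (r':ℝ),
      dist (g (0 + z)) (ps.partialSum n z) < 1 := by
    have := (Metric.tendstoUniformlyOn_iff.mp huc) 1 one_pos
    simpa using this
  -- dominated convergence
  have hB : Tendsto (fun n => ∫ θ in (0:ℝ)..(2*π), ‖(qn n).eval (circleMap 0 1 θ)‖ ^ p)
      atTop (𝓝 (∫ θ in (0:ℝ)..(2*π), ‖g (circleMap 0 1 θ)‖ ^ p)) := by
    apply intervalIntegral.tendsto_integral_filter_of_dominated_convergence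
      (fun _ => (M + 1) ^ p)
    · refine Filter.Eventually.of_forall fun n => ?_
      apply Continuous.aestronglyMeasurable
      apply (Real.continuous_rpow_const hp.le).comp
      exact continuous_norm.comp ((qn n).continuous_aeval.comp (continuous_circleMap 0 1))
    · filter_upwards [hev] with n hn
      refine ae_of_all _ fun θ _ => ?_
      rw [Real.norm_eq_abs, _root_.abs_of_nonneg (Real.rpow_nonneg (norm_nonneg _) p)]
      apply Real.rpow_le_rpow (norm_nonneg _) _ hp.le
      have h1 := hn _ (hcircr' θ)
      rw [dist_comm, dist_eq_norm] at h1
      rw [zero_add] at h1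
      have h2 := hM _ (hcirc1 θ)
      calc ‖(qn n).eval (circleMap 0 1 θ)‖
          = ‖ps.partialSum n (circleMap 0 1 θ)‖ := by rw [hqneval]
        _ = ‖g (circleMap 0 1 θ) + (ps.partialSum n (circleMap 0 1 θ) - g (circleMap 0 1 θ))‖ := by
            congr 1; ring
        _ ≤ ‖g (circleMap 0 1 θ)‖ + ‖ps.partialSum n (circleMap 0 1 θ) - g (circleMap 0 1 θ)‖ :=
            norm_add_le _ _
        _ ≤ M + 1 := add_le_add h2 h1.le
    · exact intervalIntegrable_const
    · refine ae_of_all _ fun θ _ => ?_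
      have h1 : Tendsto (fun n => ps.partialSum n (circleMap 0 1 θ)) atTop
          (𝓝 (g (0 + circleMap 0 1 θ))) := huc.tendsto_at (hcircr' θ)
      rw [zero_add] at h1
      have h2 : Tendsto (fun n => ‖(qn n).eval (circleMap 0 1 θ)‖) atTop
          (𝓝 (‖g (circleMap 0 1 θ)‖)) := by
        simp only [hqneval]
        exact (continuous_norm.tendsto _).comp h1
      exact ((Real.continuous_rpow_const hp.le).tendsto _).comp h2
  refine ge_of_tendsto hB ?_
  filter_upwards [Filter.eventually_ge_atTop 1] with n hn
  have := L3 (qn n)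
  rwa [hq0 n hn] at this


lemma B1 {p : ℝ} (hp : 0 < p) {g : ℂ → ℂ} {R : ℝ} (hR : 1 < R)
    (hg : DifferentiableOn ℂ g (ball (0:ℂ) R)) :
    2 * π * ‖g 0‖ ^ p
      ≤ ∫ θ in (0:ℝ)..(2*π), ‖g (circleMap 0 1 θ)‖ ^ p :=
  L4core hp (L3core hp (fun {ψ} hψ {r} hr0 hr1 => L1 hψ hr0 hr1)) hR hg

section main

variable {n : ℕ}

lemma rot_mp {c : ℂ} (hc : ‖c‖ = 1) :
    MeasurePreserving (fun w : EuclideanSpace ℂ (Fin n) => c • w)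
      (volume : Measure (EuclideanSpace ℂ (Fin n))) volume := by
  have hmem : c ∈ Metric.sphere (0:ℂ) 1 := by
    simp [hc]
  have h := (_root_.rotation (⟨c, hmem⟩ : _root_.Circle)).measurePreserving
  have hfun : (fun z : ℂ => c * z) = ⇑(_root_.rotation (⟨c, hmem⟩ : _root_.Circle)) := by
    funext z; exact (rotation_apply (⟨c, hmem⟩ : _root_.Circle) z).symm
  have hc1 : MeasurePreserving (fun z : ℂ => c * z) volume volume := by
    rw [hfun]; exact h
  have hpi : MeasurePreserving (fun w : Fin n → ℂ => c • w) volume volume :=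
    MeasureTheory.volume_preserving_pi fun _ : Fin n => hc1
  have ht : MeasurePreserving (WithLp.toLp 2 : (Fin n → ℂ) → EuclideanSpace ℂ (Fin n))
      volume volume := ⟨WithLp.measurable_toLp _ _, rfl⟩
  have ho : MeasurePreserving (WithLp.ofLp : EuclideanSpace ℂ (Fin n) → (Fin n → ℂ))
      volume volume := by
    refine ⟨WithLp.measurable_ofLp _ _, ?_⟩
    show Measure.map WithLp.ofLp (Measure.map (WithLp.toLp 2) volume) = volume
    rw [Measure.map_map (WithLp.measurable_ofLp _ _) (WithLp.measurable_toLp _ _)]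
    exact Measure.map_id
  have hfun2 : (fun w : EuclideanSpace ℂ (Fin n) => c • w)
      = WithLp.toLp 2 ∘ (fun w : Fin n → ℂ => c • w) ∘ WithLp.ofLp := by
    funext w; ext i; simp
  rw [hfun2]
  exact ht.comp (hpi.comp ho)

instance : BorelSpace (EuclideanSpace ℂ (Fin n)) :=
  inferInstance

instance : SigmaFinite (volume : Measure (EuclideanSpace ℂ (Fin n))) :=
  (MeasurableEquiv.toLp 2 (Fin n → ℂ)).measurableEmbedding.sigmaFinite_map

lemma rot_emb {c : ℂ} (hc0 : c ≠ 0) :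
    MeasurableEmbedding (fun w : EuclideanSpace ℂ (Fin n) => c • w) := by
  have h : MeasurableEmbedding (fun w : EuclideanSpace ℂ (Fin n) => c • w) :=
    (Homeomorph.smulOfNeZero (α := EuclideanSpace ℂ (Fin n)) c hc0).toMeasurableEquiv.measurableEmbedding
  exact h

variable (Ω : Set (EuclideanSpace ℂ (Fin n)))

lemma rot_preim (hcirc : ∀ z ∈ Ω, ∀ μ : ℂ, ‖μ‖ ≤ 1 → μ • z ∈ Ω)
    {c : ℂ} (hc : ‖c‖ = 1) : (fun w => c • w) ⁻¹' Ω = Ω := by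
  have hc0 : c ≠ 0 := by intro h; rw [h] at hc; simp at hc
  ext w
  simp only [Set.mem_preimage]
  constructor
  · intro hw
    have h2 := hcirc _ hw c⁻¹ (by rw [norm_inv, hc]; norm_num)
    rwa [inv_smul_smul₀ hc0 w] at h2
  · intro hw
    exact hcirc _ hw c (le_of_eq hc)

lemma key (hΩo : IsOpen Ω)
    (hcirc : ∀ z ∈ Ω, ∀ μ : ℂ, ‖μ‖ ≤ 1 → μ • z ∈ Ω)
    {p : ℝ} (hp : 0 < p) {f : EuclideanSpace ℂ (Fin n) → ℂ}
    (hf : DifferentiableOn ℂ f Ω) :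
    ENNReal.ofReal (2*π) * (ENNReal.ofReal (‖f 0‖ ^ p) * volume Ω)
      ≤ ENNReal.ofReal (2*π) * ∫⁻ ζ in Ω, ENNReal.ofReal (‖f ζ‖ ^ p) := by
  set S : Set ℝ := Set.Ioc (0:ℝ) (2*π) with hS
  set G : EuclideanSpace ℂ (Fin n) → ℝ≥0∞ := fun w => ENNReal.ofReal (‖f w‖ ^ p)
    with hG
  have habs1 : ∀ θ : ℝ, ‖circleMap 0 1 θ‖ = 1 := by
    intro θ; rw [norm_circleMap_zero]; norm_num
  -- the slice inequality
  have hz : ∀ z ∈ Ω, ENNReal.ofReal (2*π * ‖f 0‖ ^ p)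
      ≤ ∫⁻ θ in S, G (circleMap 0 1 θ • z) := by
    intro z hz
    have hU : IsOpen {μ : ℂ | μ • z ∈ Ω} :=
      hΩo.preimage (continuous_id.smul continuous_const)
    have hsub : closedBall (0:ℂ) 1 ⊆ {μ : ℂ | μ • z ∈ Ω} := fun μ hμ =>
      hcirc z hz μ (by exact mem_closedBall_zero_iff.mp hμ)
    obtain ⟨δ, hδ0, hδ⟩ :=
      (isCompact_closedBall (0:ℂ) 1).exists_thickening_subset_open hU hsub
    have hball : ball (0:ℂ) (δ + 1) ⊆ {μ : ℂ | μ • z ∈ Ω} := by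
      rw [← thickening_closedBall hδ0 zero_le_one]
      exact hδ
    have hgd : DifferentiableOn ℂ (fun μ : ℂ => f (μ • z)) (ball 0 (δ+1)) :=
      hf.comp ((differentiable_id.smul_const z).differentiableOn)
        (fun μ hμ => hball hμ)
    have h1 := B1 hp (by linarith : 1 < δ + 1) hgd
    rw [zero_smul] at h1
    rw [intervalIntegral.integral_of_le (by positivity)] at h1
    have hcont : Continuous fun θ : ℝ => ‖f (circleMap 0 1 θ • z)‖ ^ p := by
      apply (Real.continuous_rpow_const hp.le).comp
      apply continuous_norm.comp
      apply hf.continuousOn.comp_continuous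
        ((continuous_circleMap 0 1).smul continuous_const)
      intro θ
      exact hcirc z hz _ (le_of_eq (habs1 θ))
    have hInt : IntegrableOn (fun θ : ℝ => ‖f (circleMap 0 1 θ • z)‖ ^ p) S volume :=
      hcont.integrableOn_Ioc
    calc ENNReal.ofReal (2*π * ‖f 0‖ ^ p)
        ≤ ENNReal.ofReal (∫ θ in S, ‖f (circleMap 0 1 θ • z)‖ ^ p) :=
          ENNReal.ofReal_le_ofReal h1
      _ = ∫⁻ θ in S, G (circleMap 0 1 θ • z) :=
          ofReal_integral_eq_lintegral_ofReal hInt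
            (ae_of_all _ fun θ => Real.rpow_nonneg (norm_nonneg _) p)
  -- measurability for Tonelli
  have hFm : AEMeasurable (fun q : EuclideanSpace ℂ (Fin n) × ℝ => G (circleMap 0 1 q.2 • q.1))
      ((volume.restrict Ω).prod (volume.restrict S)) := by
    rw [Measure.prod_restrict]
    apply ContinuousOn.aemeasurable _ (hΩo.measurableSet.prod measurableSet_Ioc)
    have hin : ContinuousOn (fun q : EuclideanSpace ℂ (Fin n) × ℝ => f (circleMap 0 1 q.2 • q.1))
        (Ω ×ˢ S) := by
      apply hf.continuousOn.comp
      · exact (((continuous_circleMap 0 1).comp continuous_snd).smul continuous_fst).continuousOn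
      · intro q hq
        exact hcirc _ hq.1 _ (le_of_eq (habs1 q.2))
    exact ENNReal.continuous_ofReal.comp_continuousOn
      ((Real.continuous_rpow_const hp.le).comp_continuousOn
        (continuous_norm.comp_continuousOn hin))
  calc ENNReal.ofReal (2*π) * (ENNReal.ofReal (‖f 0‖ ^ p) * volume Ω)
      = ∫⁻ _ in Ω, ENNReal.ofReal (2*π * ‖f 0‖ ^ p) := by
        rw [setLIntegral_const, ← mul_assoc, ← ENNReal.ofReal_mul (by positivity : (0:ℝ) ≤ 2*π)]
    _ ≤ ∫⁻ z in Ω, ∫⁻ θ in S, G (circleMap 0 1 θ • z) :=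
        setLIntegral_mono' hΩo.measurableSet hz
    _ = ∫⁻ θ in S, ∫⁻ z in Ω, G (circleMap 0 1 θ • z) := lintegral_lintegral_swap hFm
    _ = ∫⁻ θ in S, ∫⁻ z in Ω, G z := by
        apply setLIntegral_congr_fun measurableSet_Ioc
        intro θ hθ
        have h2 := (rot_mp (n := n) (habs1 θ)).setLIntegral_comp_preimage_emb
          (rot_emb (by intro h; have := habs1 θ; rw [h] at this; simpa using this)) G Ω
        rw [rot_preim Ω hcirc (habs1 θ)] at h2
        exact h2
    _ = ENNReal.ofReal (2*π) * ∫⁻ z in Ω, G z := by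
        rw [setLIntegral_const, hS, Real.volume_Ioc, mul_comm]
        norm_num


instance : IsFiniteMeasureOnCompacts (volume : Measure (EuclideanSpace ℂ (Fin n))) :=
  Measure.IsFiniteMeasureOnCompacts.map (volume : Measure (Fin n → ℂ))
    (EuclideanSpace.equiv (Fin n) ℂ).symm.toHomeomorph

instance : Measure.IsOpenPosMeasure (volume : Measure (EuclideanSpace ℂ (Fin n))) :=
  (EuclideanSpace.equiv (Fin n) ℂ).symm.toHomeomorph.continuous.isOpenPosMeasure_map
    (μ := (volume : Measure (Fin n → ℂ)))
    (EuclideanSpace.equiv (Fin n) ℂ).symm.toHomeomorph.surjective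

end main

/-- If `Ω ⊂ ℂⁿ` is a bounded complete circular domain
(`μ•z ∈ Ω` whenever `z ∈ Ω`, `|μ| ≤ 1`; in particular `0 ∈ Ω`),
then `K_p(0) = 1/λ(Ω)` for every `0 < p < ∞`. -/
theorem kernel_at_zero_completeCircular {n : ℕ} (Ω : Set (EuclideanSpace ℂ (Fin n)))
    (hΩo : IsOpen Ω) (hΩc : IsConnected Ω) (hΩb : Bornology.IsBounded Ω)
    (hcirc : ∀ z ∈ Ω, ∀ μ : ℂ, ‖μ‖ ≤ 1 → μ • z ∈ Ω) :
    ∀ p : ℝ, 0 < p → bergmanK Ω p 0 = 1 / (volume Ω).toReal := by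
  intro p hp
  have h0 : (0 : EuclideanSpace ℂ (Fin n)) ∈ Ω := by
    obtain ⟨z, hz⟩ := hΩc.nonempty
    simpa using hcirc z hz 0 (by simp)
  have hvol_pos : 0 < volume Ω := hΩo.measure_pos volume ⟨0, h0⟩
  have hvol_fin : volume Ω < ⊤ := hΩb.measure_lt_top
  set V := (volume Ω).toReal with hV
  have hV_pos : 0 < V := ENNReal.toReal_pos hvol_pos.ne' hvol_fin.ne
  have hub : ∀ t ∈ { t : ℝ | ∃ f, MemAp Ω p f ∧ (∃ ζ ∈ Ω, f ζ ≠ 0) ∧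
      t = ‖f 0‖ ^ p / ∫ ζ in Ω, ‖f ζ‖ ^ p }, t ≤ 1 / V := by
    rintro t ⟨f, hmem', -, rfl⟩
    obtain ⟨hfd, hfl⟩ := hmem'
    have hnn : ∀ ζ, 0 ≤ ‖f ζ‖ ^ p :=
      fun ζ => Real.rpow_nonneg (norm_nonneg _) _
    have hInn : 0 ≤ ∫ ζ in Ω, ‖f ζ‖ ^ p := integral_nonneg hnn
    rcases eq_or_lt_of_le hInn with hI0 | hIpos
    · rw [← hI0, div_zero]
      positivity
    · have hfc : ContinuousOn (fun ζ => ‖f ζ‖ ^ p) Ω :=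
        (Real.continuous_rpow_const hp.le).comp_continuousOn
          (continuous_norm.comp_continuousOn hfd.continuousOn)
      have hmeas : AEMeasurable (fun ζ => ‖f ζ‖ ^ p) (volume.restrict Ω) :=
        hfc.aemeasurable hΩo.measurableSet
      have hIeq : ∫ ζ in Ω, ‖f ζ‖ ^ p
          = (∫⁻ ζ in Ω, ENNReal.ofReal (‖f ζ‖ ^ p)).toReal :=
        integral_eq_lintegral_of_nonneg_ae (ae_of_all _ fun ζ => hnn ζ)
          hmeas.aestronglyMeasurable
      have hkey := key Ω hΩo hcirc hp hfd
      have h2π : (ENNReal.ofReal (2*π)) ≠ 0 := by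
        simp only [ne_eq, ENNReal.ofReal_eq_zero, not_le]
        positivity
      have hkey2 : ENNReal.ofReal (‖f 0‖ ^ p) * volume Ω
          ≤ ∫⁻ ζ in Ω, ENNReal.ofReal (‖f ζ‖ ^ p) :=
        (ENNReal.mul_le_mul_iff_right h2π ENNReal.ofReal_ne_top).mp hkey
      have hreal : ‖f 0‖ ^ p * V ≤ ∫ ζ in Ω, ‖f ζ‖ ^ p := by
        rw [hIeq]
        have h1 : (ENNReal.ofReal (‖f 0‖ ^ p) * volume Ω).toReal
            = ‖f 0‖ ^ p * V := by
          rw [ENNReal.toReal_mul, ENNReal.toReal_ofReal (hnn 0)]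
        rw [← h1]
        exact ENNReal.toReal_mono hfl.ne hkey2
      rw [div_le_div_iff₀ hIpos hV_pos, one_mul]
      linarith
  have hmem : 1 / V ∈ { t : ℝ | ∃ f, MemAp Ω p f ∧ (∃ ζ ∈ Ω, f ζ ≠ 0) ∧
      t = ‖f 0‖ ^ p / ∫ ζ in Ω, ‖f ζ‖ ^ p } := by
    refine ⟨fun _ => 1, ⟨differentiableOn_const 1, ?_⟩, ⟨0, h0, one_ne_zero⟩, ?_⟩
    · simp only [norm_one, Real.one_rpow, ENNReal.ofReal_one]
      rw [setLIntegral_one]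
      exact hvol_fin
    · simp only [norm_one, Real.one_rpow]
      rw [setIntegral_const, smul_eq_mul, mul_one]; rfl
  rw [bergmanK]
  exact le_antisymm (csSup_le ⟨_, hmem⟩ hub) (le_csSup ⟨1/V, hub⟩ hmem)


end
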